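/- Let A ∈ R^{n×d}, let U_A have orthonormal columns spanning the column space of A, and suppose Π is such that (ΠU_A)ᵀ(ΠU_A) is invertible. Define X̃ = ((ΠA)ᵀΠA)^+ (ΠA)ᵀΠB. Then A X̃ − B = U_A((ΠU_A)ᵀΠU_A)^{-1}(ΠU_A)ᵀΠ P_{Ā}B − P_{Ā}B, where P_A = U_A U_Aᵀ and P_{Ā} = I − P_A; in particular, the sketched regression error depends only on P_{Ā}B, and if Π is a (1/2)-subspace embedding for the column space of A then ‖AX̃ − B‖² ≤ (‖(ΠU_A)ᵀΠP_{Ā}B‖·‖((ΠU_A)ᵀΠU_A)^{-1}‖)² + ‖P_{Ā}B‖². -/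
import Mathlib
set_option maxHeartbeats 1000000

open Matrix MeasureTheory

noncomputable def opNorm {α β : Type} [Fintype α] [Fintype β] [DecidableEq β]
    (A : Matrix α β ℝ) : ℝ :=
  ‖LinearMap.toContinuousLinearMap (Matrix.toEuclideanLin A)‖

noncomputable def frobNorm {α β : Type} [Fintype α] [Fintype β] (A : Matrix α β ℝ) : ℝ :=
  Real.sqrt (∑ i, ∑ j, A i j ^ 2)

open scoped Matrix.Norms.L2Operator

lemma opNorm_eq {α β : Type} [Fintype α] [Fintype β] [DecidableEq β] (A : Matrix α β ℝ) :
    opNorm A = ‖A‖ := rfl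

lemma ct_eq {a b : ℕ} (Y : Matrix (Fin a) (Fin b) ℝ) : Yᴴ = Yᵀ := by
  ext i j; simp [Matrix.conjTranspose_apply]

lemma mulmul {a b c : ℕ} (M : Matrix (Fin a) (Fin b) ℝ) (N : Matrix (Fin b) (Fin c) ℝ)
    (x : EuclideanSpace ℝ (Fin c)) :
    Matrix.toEuclideanLin (M * N) x = Matrix.toEuclideanLin M (Matrix.toEuclideanLin N x) := by
  simp [Matrix.toEuclideanLin_apply, Matrix.mulVec_mulVec]

lemma le_op {a c : ℕ} (Y : Matrix (Fin a) (Fin c) ℝ) (x : EuclideanSpace ℝ (Fin c)) :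
    ‖Matrix.toEuclideanLin Y x‖ ≤ ‖Y‖ * ‖x‖ := by
  exact ((Matrix.toEuclideanLin.trans LinearMap.toContinuousLinearMap) Y).le_opNorm x

lemma pyth {a c : ℕ} (Y Z : Matrix (Fin a) (Fin c) ℝ) (h : Yᵀ * Z = 0) :
    ‖Y - Z‖ ^ 2 ≤ ‖Y‖ ^ 2 + ‖Z‖ ^ 2 := by
  have hb : ‖Y - Z‖ ≤ Real.sqrt (‖Y‖ ^ 2 + ‖Z‖ ^ 2) := by
    rw [Matrix.l2_opNorm_def]
    apply ContinuousLinearMap.opNorm_le_bound _ (Real.sqrt_nonneg _)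
    intro x
    have hTx : ((Matrix.toEuclideanLin.trans LinearMap.toContinuousLinearMap) (Y - Z)) x
        = Matrix.toEuclideanLin Y x - Matrix.toEuclideanLin Z x := by
      simp [map_sub]
    have hinner : inner (𝕜 := ℝ) (Matrix.toEuclideanLin Y x) (Matrix.toEuclideanLin Z x) = 0 := by
      have h1 : Matrix.toEuclideanLin (Yᵀ * Z) x
          = LinearMap.adjoint (Matrix.toEuclideanLin Y) (Matrix.toEuclideanLin Z x) := by
        rw [mulmul, ← ct_eq, Matrix.toEuclideanLin_conjTranspose_eq_adjoint]
      have h2 := LinearMap.adjoint_inner_right (Matrix.toEuclideanLin Y) x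
        (Matrix.toEuclideanLin Z x)
      rw [← h2, ← h1, h]
      simp
    have hsq : ‖Matrix.toEuclideanLin Y x - Matrix.toEuclideanLin Z x‖ ^ 2
        = ‖Matrix.toEuclideanLin Y x‖ ^ 2 + ‖Matrix.toEuclideanLin Z x‖ ^ 2 := by
      rw [norm_sub_sq_real, hinner]; ring
    have hY := le_op Y x
    have hZ := le_op Z x
    have hbound : ‖Matrix.toEuclideanLin Y x - Matrix.toEuclideanLin Z x‖ ^ 2
        ≤ (Real.sqrt (‖Y‖ ^ 2 + ‖Z‖ ^ 2) * ‖x‖) ^ 2 := by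
      rw [hsq, mul_pow, Real.sq_sqrt (by positivity)]
      have h1 : ‖Matrix.toEuclideanLin Y x‖ ^ 2 ≤ ‖Y‖ ^ 2 * ‖x‖ ^ 2 := by
        rw [← mul_pow]; exact pow_le_pow_left₀ (norm_nonneg _) hY 2
      have h2 : ‖Matrix.toEuclideanLin Z x‖ ^ 2 ≤ ‖Z‖ ^ 2 * ‖x‖ ^ 2 := by
        rw [← mul_pow]; exact pow_le_pow_left₀ (norm_nonneg _) hZ 2
      linarith
    rw [hTx]
    have := Real.sqrt_le_sqrt hbound
    rwa [Real.sqrt_sq (norm_nonneg _), Real.sqrt_sq (by positivity)] at this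
  calc ‖Y - Z‖ ^ 2 ≤ Real.sqrt (‖Y‖ ^ 2 + ‖Z‖ ^ 2) ^ 2 :=
        pow_le_pow_left₀ (norm_nonneg _) hb 2
    _ = ‖Y‖ ^ 2 + ‖Z‖ ^ 2 := Real.sq_sqrt (by positivity)

lemma norm_isom_le_one {n d : ℕ} (U : Matrix (Fin n) (Fin d) ℝ) (hU : Uᵀ * U = 1) :
    ‖U‖ ≤ 1 := by
  have h1 : ‖Uᴴ * U‖ = ‖U‖ * ‖U‖ := Matrix.l2_opNorm_conjTranspose_mul_self U
  rw [ct_eq, hU] at h1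
  have h2 : ‖(1 : Matrix (Fin d) (Fin d) ℝ)‖ ≤ 1 := by
    rw [Matrix.cstar_norm_def, _root_.map_one]
    exact ContinuousLinearMap.norm_id_le
  nlinarith [norm_nonneg U]

/-- the sketched-regression error identity and bound.  Here `U` has orthonormal
columns spanning the column space of `A` (so `A = U·R` and `U = A·S` for some `R, S`), the
sketched Gram matrices are invertible, and `P_Ā B = B − U Uᵀ B`. -/
theorem stmt11 {n d p m : ℕ} (A : Matrix (Fin n) (Fin d) ℝ) (B : Matrix (Fin n) (Fin p) ℝ)
    (U : Matrix (Fin n) (Fin d) ℝ) (Φ : Matrix (Fin m) (Fin n) ℝ)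
    (hU : Uᵀ * U = 1)
    (hAU : ∃ R : Matrix (Fin d) (Fin d) ℝ, A = U * R)
    (hUA : ∃ S : Matrix (Fin d) (Fin d) ℝ, U = A * S)
    (hinvU : IsUnit ((Φ * U)ᵀ * (Φ * U)))
    (hinvA : IsUnit ((Φ * A)ᵀ * (Φ * A)))
    (X : Matrix (Fin d) (Fin p) ℝ)
    (hX : X = ((Φ * A)ᵀ * (Φ * A))⁻¹ * (Φ * A)ᵀ * (Φ * B)) :
    A * X - B =
      U * ((Φ * U)ᵀ * (Φ * U))⁻¹ * (Φ * U)ᵀ * Φ * (B - U * Uᵀ * B) - (B - U * Uᵀ * B) ∧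
    (opNorm ((Φ * U)ᵀ * (Φ * U) - 1) ≤ 1 / 2 →
      opNorm (A * X - B) ^ 2 ≤
        (opNorm ((Φ * U)ᵀ * (Φ * (B - U * Uᵀ * B))) *
          opNorm (((Φ * U)ᵀ * (Φ * U))⁻¹)) ^ 2 + opNorm (B - U * Uᵀ * B) ^ 2) := by
  obtain ⟨R, hR⟩ := hAU
  obtain ⟨S, hS⟩ := hUA
  set G := (Φ * U)ᵀ * (Φ * U) with hG
  -- R * S = 1
  have hRS : R * S = 1 := by
    have h0 : U = U * (R * S) := by
      conv_lhs => rw [hS, hR]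
      rw [Matrix.mul_assoc]
    calc R * S = (Uᵀ * U) * (R * S) := by rw [hU, Matrix.one_mul]
      _ = Uᵀ * (U * (R * S)) := by rw [Matrix.mul_assoc]
      _ = Uᵀ * U := by rw [← h0]
      _ = 1 := hU
  have hSR : S * R = 1 := mul_eq_one_comm.mp hRS
  have hRunit : IsUnit R := ⟨⟨R, S, hRS, hSR⟩, rfl⟩
  have hRdet : IsUnit R.det := (Matrix.isUnit_iff_isUnit_det R).mp hRunit
  have hGdet : IsUnit G.det := (Matrix.isUnit_iff_isUnit_det G).mp hinvU
  have hGG : G⁻¹ * G = 1 := Matrix.nonsing_inv_mul G hGdet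
  have hRR : R * R⁻¹ = 1 := Matrix.mul_nonsing_inv R hRdet
  have hRtR : (Rᵀ)⁻¹ * Rᵀ = 1 := Matrix.nonsing_inv_mul Rᵀ (by rwa [Matrix.det_transpose])
  -- sketched Gram
  have hgram : (Φ * A)ᵀ * (Φ * A) = Rᵀ * (G * R) := by
    rw [hR, hG]
    simp only [Matrix.transpose_mul, Matrix.mul_assoc]
  have hginv : ((Φ * A)ᵀ * (Φ * A))⁻¹ = R⁻¹ * (G⁻¹ * (Rᵀ)⁻¹) := by
    rw [hgram, Matrix.mul_inv_rev, Matrix.mul_inv_rev, Matrix.mul_assoc]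
  -- key identity
  have key : A * X = U * G⁻¹ * (Φ * U)ᵀ * Φ * B := by
    have hPAt : (Φ * A)ᵀ = Rᵀ * (Φ * U)ᵀ := by
      rw [hR, ← Matrix.mul_assoc, Matrix.transpose_mul]
    rw [hX, hginv, hPAt, hR]
    calc U * R * (R⁻¹ * (G⁻¹ * Rᵀ⁻¹) * (Rᵀ * (Φ * U)ᵀ) * (Φ * B))
        = U * ((R * R⁻¹) * (G⁻¹ * ((Rᵀ⁻¹ * Rᵀ) * ((Φ * U)ᵀ * (Φ * B))))) := by
          simp only [Matrix.mul_assoc]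
      _ = U * G⁻¹ * (Φ * U)ᵀ * Φ * B := by
          rw [hRR, hRtR, Matrix.one_mul, Matrix.one_mul]
          simp only [Matrix.mul_assoc]
  -- cancellation
  have hcancel : U * G⁻¹ * (Φ * U)ᵀ * Φ * (U * Uᵀ * B) = U * Uᵀ * B := by
    calc U * G⁻¹ * (Φ * U)ᵀ * Φ * (U * Uᵀ * B)
        = U * ((G⁻¹ * G) * (Uᵀ * B)) := by
          rw [hG]; simp only [Matrix.mul_assoc]
      _ = U * Uᵀ * B := by rw [hGG, Matrix.one_mul, Matrix.mul_assoc]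
  have part1 : A * X - B =
      U * G⁻¹ * (Φ * U)ᵀ * Φ * (B - U * Uᵀ * B) - (B - U * Uᵀ * B) := by
    rw [Matrix.mul_sub, hcancel, key]
    abel
  refine ⟨part1, fun _ => ?_⟩
  -- part 2
  set Z := B - U * Uᵀ * B with hZ
  have hUZ : Uᵀ * Z = 0 := by
    rw [hZ, Matrix.mul_sub, ← Matrix.mul_assoc, ← Matrix.mul_assoc, hU, Matrix.one_mul, sub_self]
  set W := (Φ * U)ᵀ * (Φ * Z) with hW
  set Y := U * (G⁻¹ * W) with hY
  have hYZ : A * X - B = Y - Z := by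
    rw [part1, hY, hW]
    simp only [Matrix.mul_assoc]
  have hperp : Yᵀ * Z = 0 := by
    rw [hY, Matrix.transpose_mul, Matrix.mul_assoc, hUZ, Matrix.mul_zero]
  have hp := pyth Y Z hperp
  have hYn : ‖Y‖ ≤ ‖W‖ * ‖G⁻¹‖ := by
    calc ‖Y‖ ≤ ‖U‖ * ‖G⁻¹ * W‖ := Matrix.l2_opNorm_mul U (G⁻¹ * W)
      _ ≤ 1 * ‖G⁻¹ * W‖ := by
          apply mul_le_mul_of_nonneg_right (norm_isom_le_one U hU) (norm_nonneg _)
      _ = ‖G⁻¹ * W‖ := one_mul _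
      _ ≤ ‖G⁻¹‖ * ‖W‖ := Matrix.l2_opNorm_mul _ _
      _ = ‖W‖ * ‖G⁻¹‖ := mul_comm _ _
  have hY2 : ‖Y‖ ^ 2 ≤ (‖W‖ * ‖G⁻¹‖) ^ 2 := pow_le_pow_left₀ (norm_nonneg _) hYn 2
  simp only [opNorm_eq]
  rw [hYZ]
  calc ‖Y - Z‖ ^ 2 ≤ ‖Y‖ ^ 2 + ‖Z‖ ^ 2 := hp
    _ ≤ (‖W‖ * ‖G⁻¹‖) ^ 2 + ‖Z‖ ^ 2 := by linarith
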